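/- arXiv:2406.10416 — 3 statements merged into one kernel-verified Lean document; each statement's English description precedes it below -/
import Mathlib

section
/- Let E be a finite-dimensional real inner product space (E = EuclideanSpace ℝ (Fin d)) and let F : E → ℝ be differentiable and L-smooth, bounded below, and let w* ∈ E be a point with F(w*) ≤ F(w) for all iterates considered (e.g. F(w*) = inf F). Fix real parameters with 0 < L, 0 ≤ α < 1, ψ > 0, ρ > 0, δ ≥ 0, γ > 0, a learning rate η with 0 < η ≤ 1/(4L), and γ ≤ ρ/(L·ψ·(1−α)). Let (Ω, 𝓕, P) be a probability space with a filtration (𝓕_t)_{t∈ℕ}, and let w⁰ ∈ E be deterministic. For each round t = 0, 1, …, T−1 suppose: (i) gᵗ : Ω → E is 𝓕_{t+1}-measurable and square-integrable with E[gᵗ | 𝓕_t] = ∇F(wᵗ) almost surely and E[‖gᵗ − ∇F(wᵗ)‖² | 𝓕_t] ≤ δ² almost surely; (ii) w^{t+½} = wᵗ − η gᵗ and almost surely ‖w^{t+½}‖ ≤ ψ and ‖∇F(wᵗ)‖ ≤ ρ; (iii) for a nonempty finite (random, 𝓕_{t+1}-measurable) index set S_t there are vectors w_j^{t+½} ∈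 E, j ∈ S_t, each satisfying ‖w^{t+½} − w_j^{t+½}‖ ≤ γ·exp(−c_t)·‖w^{t+½}‖ for some constant c_t ≥ 0; (iv) w^{t+1} = α·w^{t+½} + (1−α)·(1/|S_t|)·Σ_{j∈S_t} w_j^{t+½}, and F(w^{t+1}) is integrable. Then (1/T)·Σ_{t=0}^{T−1} E[‖∇F(wᵗ)‖²] ≤ 2(F(w⁰) − F(w*))/(ηT) + 4Lηδ² + 4γρψ(1−α)/η. -/
/-!
Each BALANCE round is a stochastic gradient step perturbed by `e = wᵗ⁺¹ - wᵗ⁺½`. The accepted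
models lie in the ball of radius `γ e^{-cₜ} ‖wᵗ⁺½‖ ≤ γψ` around `wᵗ⁺½`, hence so does their
average, and `‖e‖ ≤ B := (1 - α)γψ`. The descent lemma for the `L`-smooth `F` gives
`F(wᵗ⁺¹) ≤ F(wᵗ) - η⟪∇F(wᵗ), gᵗ⟫ + Lη²‖gᵗ‖² + ρB + LB²`. In expectation, unbiasedness turns
the inner product into `E‖∇F(wᵗ)‖²` and the variance bound gives
`E‖gᵗ‖² ≤ E‖∇F(wᵗ)‖² + δ²`; with `2Lη ≤ 1` and `LB ≤ ρ` (the condition on `γ`) this yields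
`(η/2) E‖∇F(wᵗ)‖² ≤ E F(wᵗ) - E F(wᵗ⁺¹) + Lη²δ² + 2ρB`, which telescopes over `t`.
-/

open MeasureTheory RealInnerProductSpace

section Smooth

variable {E : Type*} [NormedAddCommGroup E] [InnerProductSpace ℝ E] [CompleteSpace E]
  {F : E → ℝ} {F' : E → E} {L : ℝ}

theorem descent_lemma (hF : ∀ x, HasGradientAt F (F' x) x)
    (hF' : ∀ x y, ‖F' x - F' y‖ ≤ L * ‖x - y‖) (x y : E) :
    F y ≤ F x + ⟪F' x, y - x⟫ + L / 2 * ‖y - x‖ ^ 2 := by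
  set v := y - x
  let G : ℝ → ℝ := fun s => F (x + s • v) - s * ⟪F' x, v⟫ - L / 2 * s ^ 2 * ‖v‖ ^ 2
  have hG : ∀ s, HasDerivAt G (⟪F' (x + s • v) - F' x, v⟫ - L * s * ‖v‖ ^ 2) s := by
    intro s
    have hline : HasDerivAt (fun s : ℝ => x + s • v) v s := by
      simpa using ((hasDerivAt_id s).smul_const v).const_add x
    have hFline : HasDerivAt (fun s : ℝ => F (x + s • v)) ⟪F' (x + s • v), v⟫ s :=
      (hF (x + s • v)).hasFDerivAt.comp_hasDerivAt (f := fun s : ℝ => x + s • v) s hline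
    refine ((hFline.sub ((hasDerivAt_id s).mul_const ⟪F' x, v⟫)).sub
      (((hasDerivAt_pow 2 s).const_mul (L / 2)).mul_const (‖v‖ ^ 2))).congr_deriv ?_
    rw [inner_sub_left]
    ring
  have hG_nonpos : ∀ s ∈ interior (Set.Icc (0 : ℝ) 1),
      ⟪F' (x + s • v) - F' x, v⟫ - L * s * ‖v‖ ^ 2 ≤ 0 := by
    intro s hs
    rw [interior_Icc] at hs
    rw [sub_nonpos]
    calc ⟪F' (x + s • v) - F' x, v⟫ ≤ ‖F' (x + s • v) - F' x‖ * ‖v‖ := real_inner_le_norm _ _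
      _ ≤ L * ‖s • v‖ * ‖v‖ := by
          gcongr
          simpa using hF' (x + s • v) x
      _ = L * s * ‖v‖ ^ 2 := by
          rw [norm_smul, Real.norm_of_nonneg hs.1.le]; ring
  have hanti := antitoneOn_of_hasDerivWithinAt_nonpos (convex_Icc (0 : ℝ) 1)
    (fun s _ => (hG s).continuousAt.continuousWithinAt)
    (fun s _ => (hG s).hasDerivWithinAt) hG_nonpos
  have hG0 : G 0 = F x := by simp [G]
  have hG1 : G 1 = F y - ⟪F' x, v⟫ - L / 2 * ‖v‖ ^ 2 := by simp [G, v]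
  linarith [hanti (by simp) (by simp) zero_le_one]

theorem le_of_perturbed_gradient_step (hF : ∀ x, HasGradientAt F (F' x) x)
    (hF' : ∀ x y, ‖F' x - F' y‖ ≤ L * ‖x - y‖) (hL : 0 ≤ L) {x x' g : E} {η ρ B : ℝ}
    (hρ : ‖F' x‖ ≤ ρ) (hB : ‖x' - (x - η • g)‖ ≤ B) :
    F x' ≤ F x - η * ⟪F' x, g⟫ + L * η ^ 2 * ‖g‖ ^ 2 + (ρ * B + L * B ^ 2) := by
  set e := x' - (x - η • g)
  have hstep : x' - x = e - η • g := by simp only [e]; abel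
  have hdescent := descent_lemma hF hF' x x'
  have hinner : ⟪F' x, x' - x⟫ ≤ ρ * B - η * ⟪F' x, g⟫ := by
    rw [hstep, inner_sub_right, real_inner_smul_right]
    have := (real_inner_le_norm (F' x) e).trans
      (mul_le_mul hρ hB (norm_nonneg e) ((norm_nonneg _).trans hρ))
    linarith
  have hsq : ‖x' - x‖ ^ 2 ≤ 2 * B ^ 2 + 2 * η ^ 2 * ‖g‖ ^ 2 := by
    have hnorm : ‖x' - x‖ ≤ B + |η| * ‖g‖ := by
      rw [hstep]
      exact (norm_sub_le e (η • g)).trans (by rw [norm_smul, Real.norm_eq_abs]; gcongr)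
    nlinarith [norm_nonneg (x' - x), norm_nonneg e, sq_abs η,
      sq_nonneg (B - |η| * ‖g‖), abs_nonneg η, norm_nonneg g]
  nlinarith [mul_le_mul_of_nonneg_left hsq hL]

end Smooth

section Averaging

variable {E : Type*} [SeminormedAddCommGroup E] [NormedSpace ℝ E]

theorem norm_inv_card_smul_sum_sub_le {ι : Type*} {s : Finset ι} (hs : s.Nonempty)
    {x : E} {y : ι → E} {r : ℝ} (h : ∀ j ∈ s, ‖x - y j‖ ≤ r) :
    ‖(s.card : ℝ)⁻¹ • ∑ j ∈ s, y j - x‖ ≤ r := by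
  have hmem : ∑ j ∈ s, (s.card : ℝ)⁻¹ • y j ∈ Metric.closedBall x r :=
    (convex_closedBall x r).sum_mem (fun _ _ => by positivity)
      (by simp [hs.card_ne_zero])
      (fun j hj => mem_closedBall_iff_norm'.2 (h j hj))
  rwa [← Finset.smul_sum, mem_closedBall_iff_norm] at hmem

theorem norm_balance_update_sub_le {ι : Type*} {s : Finset ι} (hs : s.Nonempty)
    {α γ c ψ : ℝ} (hα : α ≤ 1) (hγ : 0 ≤ γ) (hc : 0 ≤ c) {x : E} {y : ι → E}
    (hx : ‖x‖ ≤ ψ) (h : ∀ j ∈ s, ‖x - y j‖ ≤ γ * Real.exp (-c) * ‖x‖) :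
    ‖α • x + (1 - α) • ((s.card : ℝ)⁻¹ • ∑ j ∈ s, y j) - x‖ ≤ (1 - α) * γ * ψ := by
  have hsplit : α • x + (1 - α) • ((s.card : ℝ)⁻¹ • ∑ j ∈ s, y j) - x =
      (1 - α) • ((s.card : ℝ)⁻¹ • ∑ j ∈ s, y j - x) := by
    module
  have hexp : Real.exp (-c) ≤ 1 := Real.exp_le_one_iff.2 (neg_nonpos.2 hc)
  have hα' : 0 ≤ 1 - α := sub_nonneg.2 hα
  rw [hsplit, norm_smul, Real.norm_of_nonneg hα']
  calc (1 - α) * ‖(s.card : ℝ)⁻¹ • ∑ j ∈ s, y j - x‖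
      ≤ (1 - α) * (γ * Real.exp (-c) * ‖x‖) := by
        gcongr
        exact norm_inv_card_smul_sum_sub_le hs h
    _ ≤ (1 - α) * (γ * 1 * ψ) := by gcongr
    _ = (1 - α) * γ * ψ := by ring

end Averaging

section ConditionalExpectation

variable {Ω E : Type*} {m m0 : MeasurableSpace Ω} {μ : Measure Ω}
  [NormedAddCommGroup E] [InnerProductSpace ℝ E]

theorem MeasureTheory.MemLp.integrable_inner {f g : Ω → E} (hf : MemLp f 2 μ)
    (hg : MemLp g 2 μ) : Integrable (fun ω => ⟪f ω, g ω⟫) μ :=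
  memLp_one_iff_integrable.1 ((innerSL ℝ).memLp_of_bilin 1 hf hg)

theorem integral_le_of_condExp_le [IsProbabilityMeasure μ] (hm : m ≤ m0) {f : Ω → ℝ} {c : ℝ}
    (h : ∀ᵐ ω ∂μ, μ[f|m] ω ≤ c) : ∫ ω, f ω ∂μ ≤ c := by
  rw [← integral_condExp hm]
  simpa using integral_mono_ae integrable_condExp (integrable_const c) h

variable [CompleteSpace E] [IsFiniteMeasure μ]

theorem integral_inner_eq_of_condExp_ae_eq (hm : m ≤ m0) {g h : Ω → E}
    (hh : AEStronglyMeasurable[m] h μ) (hhg : Integrable (fun ω => ⟪h ω, g ω⟫) μ)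
    (hg : Integrable g μ) (hgh : μ[g|m] =ᵐ[μ] h) :
    ∫ ω, ⟪h ω, g ω⟫ ∂μ = ∫ ω, ‖h ω‖ ^ 2 ∂μ := calc
  ∫ ω, ⟪h ω, g ω⟫ ∂μ = ∫ ω, μ[fun ω => ⟪h ω, g ω⟫|m] ω ∂μ := (integral_condExp hm).symm
  _ = ∫ ω, ⟪h ω, μ[g|m] ω⟫ ∂μ :=
    integral_congr_ae (condExp_bilin_of_aestronglyMeasurable_left (innerSL ℝ) hh hhg hg)
  _ = ∫ ω, ‖h ω‖ ^ 2 ∂μ := integral_congr_ae <| by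
    filter_upwards [hgh] with ω hω
    rw [hω, real_inner_self_eq_norm_sq]

theorem integral_norm_sq_eq_of_condExp_ae_eq (hm : m ≤ m0) {g h : Ω → E}
    (hg : MemLp g 2 μ) (hh : MemLp h 2 μ) (hhm : AEStronglyMeasurable[m] h μ)
    (hgh : μ[g|m] =ᵐ[μ] h) :
    ∫ ω, ‖g ω‖ ^ 2 ∂μ = ∫ ω, ‖g ω - h ω‖ ^ 2 ∂μ + ∫ ω, ‖h ω‖ ^ 2 ∂μ := by
  have hcross := integral_inner_eq_of_condExp_ae_eq hm hhm (hh.integrable_inner hg)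
    (hg.integrable one_le_two) hgh
  have hexpand : ∀ ω, ‖g ω - h ω‖ ^ 2 = ‖g ω‖ ^ 2 - 2 * ⟪h ω, g ω⟫ + ‖h ω‖ ^ 2 := fun ω => by
    rw [norm_sub_sq_real, real_inner_comm]
  have hinner := (hh.integrable_inner hg).const_mul 2
  have hgsq : Integrable (fun ω => ‖g ω‖ ^ 2) μ := hg.integrable_norm_pow two_ne_zero
  have hdiff : Integrable (fun ω => ‖g ω‖ ^ 2 - 2 * ⟪h ω, g ω⟫) μ := hgsq.sub hinner
  simp_rw [hexpand]
  rw [integral_add hdiff (hh.integrable_norm_pow two_ne_zero), integral_sub hgsq hinner,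
    integral_const_mul, hcross]
  ring

end ConditionalExpectation

section StochasticStep

variable {Ω E : Type*} {m m0 : MeasurableSpace Ω} {μ : Measure Ω} [IsProbabilityMeasure μ]
  [NormedAddCommGroup E] [InnerProductSpace ℝ E] [CompleteSpace E]
  {F : E → ℝ} {F' : E → E} {L : ℝ}

theorem integral_perturbed_gradient_step_le (hm : m ≤ m0)
    (hF : ∀ x, HasGradientAt F (F' x) x) (hF' : ∀ x y, ‖F' x - F' y‖ ≤ L * ‖x - y‖)
    (hL : 0 ≤ L) {η ρ δ B : ℝ} (hη : 0 ≤ η) (hLη : 2 * L * η ≤ 1) {x x' g : Ω → E}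
    (hg : MemLp g 2 μ) (hmean : μ[g|m] =ᵐ[μ] fun ω => F' (x ω))
    (hvar : ∀ᵐ ω ∂μ, μ[fun ω => ‖g ω - F' (x ω)‖ ^ 2|m] ω ≤ δ ^ 2)
    (hρ : ∀ᵐ ω ∂μ, ‖F' (x ω)‖ ≤ ρ) (hx : Integrable (fun ω => F (x ω)) μ)
    (hx' : Integrable (fun ω => F (x' ω)) μ)
    (hstep : ∀ᵐ ω ∂μ, ‖x' ω - (x ω - η • g ω)‖ ≤ B) :
    η / 2 * ∫ ω, ‖F' (x ω)‖ ^ 2 ∂μ ≤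
      ∫ ω, F (x ω) ∂μ - ∫ ω, F (x' ω) ∂μ + (L * η ^ 2 * δ ^ 2 + (ρ * B + L * B ^ 2)) := by
  have hgradm : AEStronglyMeasurable[m] (fun ω => F' (x ω)) μ :=
    stronglyMeasurable_condExp.aestronglyMeasurable.congr hmean
  have hgrad : MemLp (fun ω => F' (x ω)) 2 μ := MemLp.of_bound (hgradm.mono hm) ρ hρ
  have hinner : Integrable (fun ω => ⟪F' (x ω), g ω⟫) μ := hgrad.integrable_inner hg
  have hgsq : Integrable (fun ω => ‖g ω‖ ^ 2) μ := hg.integrable_norm_pow two_ne_zero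
  have hcross : ∫ ω, ⟪F' (x ω), g ω⟫ ∂μ = ∫ ω, ‖F' (x ω)‖ ^ 2 ∂μ :=
    integral_inner_eq_of_condExp_ae_eq hm hgradm hinner (hg.integrable one_le_two) hmean
  have hsecond : ∫ ω, ‖g ω‖ ^ 2 ∂μ ≤ ∫ ω, ‖F' (x ω)‖ ^ 2 ∂μ + δ ^ 2 := by
    rw [integral_norm_sq_eq_of_condExp_ae_eq hm hg hgrad hgradm hmean]
    linarith [integral_le_of_condExp_le hm hvar]
  have hpointwise : ∀ᵐ ω ∂μ, F (x' ω) ≤ F (x ω) - η * ⟪F' (x ω), g ω⟫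
      + L * η ^ 2 * ‖g ω‖ ^ 2 + (ρ * B + L * B ^ 2) := by
    filter_upwards [hρ, hstep] with ω hρω hstepω
    exact le_of_perturbed_gradient_step hF hF' hL hρω hstepω
  have hdescent : Integrable (fun ω => F (x ω) - η * ⟪F' (x ω), g ω⟫) μ :=
    hx.sub (hinner.const_mul η)
  have hbound : Integrable (fun ω => F (x ω) - η * ⟪F' (x ω), g ω⟫
      + L * η ^ 2 * ‖g ω‖ ^ 2) μ := hdescent.add (hgsq.const_mul _)
  have hrhs : Integrable (fun ω => F (x ω) - η * ⟪F' (x ω), g ω⟫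
      + L * η ^ 2 * ‖g ω‖ ^ 2 + (ρ * B + L * B ^ 2)) μ := hbound.add (integrable_const _)
  have hintegral := integral_mono_ae hx' hrhs hpointwise
  rw [integral_add hbound (integrable_const _), integral_add hdescent (hgsq.const_mul _),
    integral_sub hx (hinner.const_mul η), integral_const_mul, integral_const_mul,
    integral_const, probReal_univ, one_smul, hcross] at hintegral
  have hgrad_nonneg : 0 ≤ ∫ ω, ‖F' (x ω)‖ ^ 2 ∂μ := integral_nonneg fun ω => sq_nonneg _
  nlinarith [mul_le_mul_of_nonneg_left hsecond (by positivity : 0 ≤ L * η ^ 2),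
    mul_nonneg (mul_nonneg hη (by linarith : (0 : ℝ) ≤ 1 - 2 * L * η)) hgrad_nonneg]

end StochasticStep

theorem telescoping_mean_le {a φ : ℕ → ℝ} {T : ℕ} {η C D : ℝ} (hη : 0 < η) (hC : 0 ≤ C)
    (hstep : ∀ t < T, η / 2 * a t ≤ φ t - φ (t + 1) + C) (hD : φ 0 - φ T ≤ D) :
    1 / (T : ℝ) * ∑ t ∈ Finset.range T, a t ≤ 2 * D / (η * T) + 2 * C / η := by
  rcases T.eq_zero_or_pos with rfl | hT
  · simpa using (by positivity : 0 ≤ 2 * C / η)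
  have hsum : η / 2 * ∑ t ∈ Finset.range T, a t ≤ D + T * C := calc
    η / 2 * ∑ t ∈ Finset.range T, a t ≤ ∑ t ∈ Finset.range T, (φ t - φ (t + 1) + C) := by
      rw [Finset.mul_sum]
      exact Finset.sum_le_sum fun t ht => hstep t (Finset.mem_range.1 ht)
    _ = φ 0 - φ T + T * C := by
      rw [Finset.sum_add_distrib, Finset.sum_range_sub', Finset.sum_const, Finset.card_range,
        nsmul_eq_mul]
    _ ≤ D + T * C := by linarith
  have hT' : (0 : ℝ) < T := by exact_mod_cast hT
  calc 1 / (T : ℝ) * ∑ t ∈ Finset.range T, a t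
      = 2 / (η * T) * (η / 2 * ∑ t ∈ Finset.range T, a t) := by field_simp
    _ ≤ 2 / (η * T) * (D + T * C) := by gcongr
    _ = 2 * D / (η * T) + 2 * C / η := by field_simp

theorem balance_nonconvex_general
    {d : ℕ} {F : EuclideanSpace ℝ (Fin d) → ℝ}
    {F' : EuclideanSpace ℝ (Fin d) → EuclideanSpace ℝ (Fin d)}
    (hdiff : ∀ x, HasGradientAt F (F' x) x)
    {L α ψ ρ δ γ η : ℝ}
    (hsmooth : ∀ x y, ‖F' x - F' y‖ ≤ L * ‖x - y‖)
    {wstar : EuclideanSpace ℝ (Fin d)} (hmin : ∀ x, F wstar ≤ F x)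
    (hL : 0 < L) (hα1 : α < 1)
    (hψ : 0 < ψ) (hρ : 0 < ρ) (hγ : 0 < γ)
    (hη0 : 0 < η) (hη : η ≤ 1 / (4 * L))
    (hγle : γ ≤ ρ / (L * ψ * (1 - α)))
    {Ω : Type*} {mΩ : MeasurableSpace Ω} {P : Measure Ω} [IsProbabilityMeasure P]
    (ℱ : Filtration ℕ mΩ)
    {ι : Type*} {T : ℕ}
    (w : ℕ → Ω → EuclideanSpace ℝ (Fin d)) (w0 : EuclideanSpace ℝ (Fin d))
    (hw0 : w 0 = fun _ => w0)
    (g : ℕ → Ω → EuclideanSpace ℝ (Fin d))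
    (whalf : ℕ → Ω → EuclideanSpace ℝ (Fin d))
    (hwhalf : ∀ t ω, whalf t ω = w t ω - η • g t ω)
    (c : ℕ → ℝ) (hc : ∀ t, 0 ≤ c t)
    (S : ℕ → Ω → Finset ι) (wj : ℕ → ι → Ω → EuclideanSpace ℝ (Fin d))
    (hgL2 : ∀ t < T, MemLp (g t) 2 P)
    (hgmean : ∀ t < T, P[g t|ℱ t] =ᵐ[P] fun ω => F' (w t ω))
    (hgvar : ∀ t < T,
      ∀ᵐ ω ∂P, (P[fun ω' => ‖g t ω' - F' (w t ω')‖ ^ 2|ℱ t]) ω ≤ δ ^ 2)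
    (hψbd : ∀ t < T, ∀ᵐ ω ∂P, ‖whalf t ω‖ ≤ ψ)
    (hρbd : ∀ t < T, ∀ᵐ ω ∂P, ‖F' (w t ω)‖ ≤ ρ)
    (hSne : ∀ t < T, ∀ ω, (S t ω).Nonempty)
    (haccept : ∀ t < T, ∀ ω, ∀ j ∈ S t ω,
      ‖whalf t ω - wj t j ω‖ ≤ γ * Real.exp (-c t) * ‖whalf t ω‖)
    (hupdate : ∀ t < T, ∀ ω, w (t + 1) ω =
      α • whalf t ω + (1 - α) • (((S t ω).card : ℝ)⁻¹ • ∑ j ∈ S t ω, wj t j ω))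
    (hint : ∀ t < T, Integrable (fun ω => F (w (t + 1) ω)) P) :
    (1 / (T : ℝ)) * ∑ t ∈ Finset.range T, ∫ ω, ‖F' (w t ω)‖ ^ 2 ∂P ≤
      2 * (F w0 - F wstar) / (η * T) + 4 * L * η * δ ^ 2
        + 4 * γ * ρ * ψ * (1 - α) / η := by
  set B := (1 - α) * γ * ψ
  have hα : 0 < 1 - α := sub_pos.2 hα1
  have hLB : L * B ≤ ρ := by rw [le_div_iff₀ (by positivity)] at hγle; linarith
  have hLη : 2 * L * η ≤ 1 := by rw [le_div_iff₀ (by positivity)] at hη; linarith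
  have hFint : ∀ t ≤ T, Integrable (fun ω => F (w t ω)) P
    | 0, _ => by simp [hw0]
    | t + 1, ht => hint t ht
  have hstep : ∀ t < T, ∀ᵐ ω ∂P, ‖w (t + 1) ω - (w t ω - η • g t ω)‖ ≤ B := fun t ht => by
    filter_upwards [hψbd t ht] with ω hψω
    rw [← hwhalf, hupdate t ht ω]
    exact norm_balance_update_sub_le (hSne t ht ω) hα1.le hγ.le (hc t) hψω (haccept t ht ω)
  have hround : ∀ t < T, η / 2 * ∫ ω, ‖F' (w t ω)‖ ^ 2 ∂P ≤ ∫ ω, F (w t ω) ∂P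
      - ∫ ω, F (w (t + 1) ω) ∂P + (L * η ^ 2 * δ ^ 2 + (ρ * B + L * B ^ 2)) := fun t ht =>
    integral_perturbed_gradient_step_le (ℱ.le t) hdiff hsmooth hL.le hη0.le hLη (hgL2 t ht)
      (hgmean t ht) (hgvar t ht) (hρbd t ht) (hFint t ht.le) (hint t ht) (hstep t ht)
  have hgap : ∫ ω, F (w 0 ω) ∂P - ∫ ω, F (w T ω) ∂P ≤ F w0 - F wstar := by
    have := integral_mono_ae (integrable_const (F wstar)) (hFint T le_rfl)
      (.of_forall fun ω => hmin (w T ω))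
    simp only [hw0, integral_const, probReal_univ, one_smul] at this ⊢
    linarith
  refine (telescoping_mean_le hη0 (by positivity) hround hgap).trans ?_
  have hrate : 2 * (L * η ^ 2 * δ ^ 2 + (ρ * B + L * B ^ 2)) / η ≤
      4 * L * η * δ ^ 2 + 4 * γ * ρ * ψ * (1 - α) / η := by
    rw [div_le_iff₀ hη0, add_mul, div_mul_cancel₀ _ hη0.ne']
    nlinarith [mul_le_mul_of_nonneg_right hLB (by positivity : 0 ≤ B),
      mul_nonneg hL.le (sq_nonneg (η * δ))]
  linarith

/-- **Theorem 2 (BALANCE, non-convex setting).** -/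
theorem balance_nonconvex
    {d : ℕ} {F : EuclideanSpace ℝ (Fin d) → ℝ}
    {F' : EuclideanSpace ℝ (Fin d) → EuclideanSpace ℝ (Fin d)}
    (hdiff : ∀ x, HasGradientAt F (F' x) x)
    {L α ψ ρ δ γ η : ℝ}
    (hsmooth : ∀ x y, ‖F' x - F' y‖ ≤ L * ‖x - y‖)
    {wstar : EuclideanSpace ℝ (Fin d)} (hmin : ∀ x, F wstar ≤ F x)
    (hL : 0 < L) (hα0 : 0 ≤ α) (hα1 : α < 1)
    (hψ : 0 < ψ) (hρ : 0 < ρ) (hδ : 0 ≤ δ) (hγ : 0 < γ)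
    (hη0 : 0 < η) (hη : η ≤ 1 / (4 * L))
    (hγle : γ ≤ ρ / (L * ψ * (1 - α)))
    {Ω : Type*} {mΩ : MeasurableSpace Ω} {P : Measure Ω} [IsProbabilityMeasure P]
    (ℱ : Filtration ℕ mΩ)
    {ι : Type*} {T : ℕ}
    (w : ℕ → Ω → EuclideanSpace ℝ (Fin d)) (w0 : EuclideanSpace ℝ (Fin d))
    (hw0 : w 0 = fun _ => w0)
    (g : ℕ → Ω → EuclideanSpace ℝ (Fin d))
    (whalf : ℕ → Ω → EuclideanSpace ℝ (Fin d))
    (hwhalf : ∀ t ω, whalf t ω = w t ω - η • g t ω)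
    (c : ℕ → ℝ) (hc : ∀ t, 0 ≤ c t)
    (S : ℕ → Ω → Finset ι) (wj : ℕ → ι → Ω → EuclideanSpace ℝ (Fin d))
    (hgmeas : ∀ t < T, Measurable[ℱ (t + 1)] (g t))
    (hgL2 : ∀ t < T, MemLp (g t) 2 P)
    (hgmean : ∀ t < T, P[g t|ℱ t] =ᵐ[P] fun ω => F' (w t ω))
    (hgvar : ∀ t < T,
      ∀ᵐ ω ∂P, (P[fun ω' => ‖g t ω' - F' (w t ω')‖ ^ 2|ℱ t]) ω ≤ δ ^ 2)
    (hψbd : ∀ t < T, ∀ᵐ ω ∂P, ‖whalf t ω‖ ≤ ψ)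
    (hρbd : ∀ t < T, ∀ᵐ ω ∂P, ‖F' (w t ω)‖ ≤ ρ)
    (hSne : ∀ t < T, ∀ ω, (S t ω).Nonempty)
    (hSmeas : ∀ t < T, @Measurable Ω (Finset ι) (ℱ (t + 1)) ⊤ (S t))
    (haccept : ∀ t < T, ∀ ω, ∀ j ∈ S t ω,
      ‖whalf t ω - wj t j ω‖ ≤ γ * Real.exp (-c t) * ‖whalf t ω‖)
    (hupdate : ∀ t < T, ∀ ω, w (t + 1) ω =
      α • whalf t ω + (1 - α) • (((S t ω).card : ℝ)⁻¹ • ∑ j ∈ S t ω, wj t j ω))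
    (hint : ∀ t < T, Integrable (fun ω => F (w (t + 1) ω)) P) :
    (1 / (T : ℝ)) * ∑ t ∈ Finset.range T, ∫ ω, ‖F' (w t ω)‖ ^ 2 ∂P ≤
      2 * (F w0 - F wstar) / (η * T) + 4 * L * η * δ ^ 2
        + 4 * γ * ρ * ψ * (1 - α) / η :=
  balance_nonconvex_general hdiff hsmooth hmin hL hα1 hψ hρ hγ hη0 hη hγle ℱ w w0 hw0 g whalf hwhalf
    c hc S wj hgL2 hgmean hgvar hψbd hρbd hSne haccept hupdate hint
end

section
/- Let E be a finite-dimensional real inner product space and let F : E → ℝ be differentiable and L-smooth with L > 0. Fix w ∈ E with ‖∇F(w)‖ ≤ ρ, real parameters 0 ≤ α ≤ 1, ψ > 0, ρ > 0, δ ≥ 0, γ > 0 with L·γ²·ψ²·(1−α)² ≤ γ·ρ·ψ·(1−α), and 0 < η ≤ 1/(4L). Let (Ω, 𝓕, P) be a probability space, let g : Ω → E be square-integrable with ∫ g dP = ∇F(w) and ∫ ‖g − ∇F(w)‖² dP ≤ δ², and let u : Ω → E be measurable with ‖u(ω)‖ ≤ γψ for almost every ω. Define the random point w⁺ = w − η·g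 + (1−α)·u and assume F(w⁺) is integrable. Then E[F(w⁺)] ≤ F(w) − (η/2)·‖∇F(w)‖² + 2Lη²δ² + 2γρψ(1−α). -/
/-!
The descent lemma `F (x + d) ≤ F x + ⟪∇F x, d⟫ + L/2 ‖d‖²`, applied to `d = -η g + (1 - α) u`
together with `‖d‖² ≤ 2 η² ‖g‖² + 2 (1 - α)² ‖u‖²`, bounds `F (w⁺)` by a quadratic in `g` plus a
deterministic contribution of `u`, which `L γ² ψ² (1 - α)² ≤ γ ρ ψ (1 - α)` caps at
`2 γ ρ ψ (1 - α)`. Taking expectations, unbiasedness gives `E ⟪∇F w, g⟫ = ‖∇F w‖²` and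
`E ‖g‖² = ‖∇F w‖² + E ‖g - ∇F w‖² ≤ ‖∇F w‖² + δ²`, and `L η ≤ 1/4` absorbs the extra
`L η² ‖∇F w‖²` into the margin between `η` and `η / 2`.
-/

open MeasureTheory RealInnerProductSpace

section Descent

variable {E : Type*} [NormedAddCommGroup E] [InnerProductSpace ℝ E] [CompleteSpace E]
  {F : E → ℝ} {F' : E → E} {L : ℝ}

theorem apply_add_le_of_lipschitz_gradient (hF : ∀ x, HasGradientAt F (F' x) x)
    (hF' : ∀ x y, ‖F' x - F' y‖ ≤ L * ‖x - y‖) (x d : E) :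
    F (x + d) ≤ F x + ⟪F' x, d⟫ + L / 2 * ‖d‖ ^ 2 := by
  -- The gap between `F` and its quadratic upper model along the segment is antitone on `[0, 1]`.
  set φ : ℝ → ℝ := fun t => F (x + t • d) - t * ⟪F' x, d⟫ - L / 2 * t ^ 2 * ‖d‖ ^ 2
  have hφ : ∀ t, HasDerivAt φ (⟪F' (x + t • d) - F' x, d⟫ - L * t * ‖d‖ ^ 2) t := by
    intro t
    have hline : HasDerivAt (fun t : ℝ => x + t • d) d t := by
      simpa using ((hasDerivAt_id t).smul_const d).const_add x
    have := (((hF (x + t • d)).hasFDerivAt.comp_hasDerivAt t hline).sub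
      ((hasDerivAt_id t).mul_const ⟪F' x, d⟫)).sub
      (((hasDerivAt_pow 2 t).const_mul (L / 2)).mul_const (‖d‖ ^ 2))
    refine this.congr_deriv ?_
    rw [InnerProductSpace.toDual_apply_apply, inner_sub_left]
    push_cast
    ring
  have hφ' : ∀ t ∈ interior (Set.Icc (0 : ℝ) 1),
      ⟪F' (x + t • d) - F' x, d⟫ - L * t * ‖d‖ ^ 2 ≤ 0 := by
    intro t ht
    rw [interior_Icc] at ht
    refine sub_nonpos.2 ?_
    calc ⟪F' (x + t • d) - F' x, d⟫ ≤ ‖F' (x + t • d) - F' x‖ * ‖d‖ := real_inner_le_norm _ _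
      _ ≤ L * ‖t • d‖ * ‖d‖ := by
          gcongr
          simpa using hF' (x + t • d) x
      _ = L * t * ‖d‖ ^ 2 := by rw [norm_smul, Real.norm_of_nonneg ht.1.le]; ring
  have h01 : φ 1 ≤ φ 0 := antitoneOn_of_hasDerivWithinAt_nonpos (convex_Icc 0 1)
    (fun t _ => (hφ t).continuousAt.continuousWithinAt) (fun t _ => (hφ t).hasDerivWithinAt) hφ'
    (Set.left_mem_Icc.2 zero_le_one) (Set.right_mem_Icc.2 zero_le_one) zero_le_one
  simp only [φ, one_smul, zero_smul, add_zero] at h01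
  linarith

theorem apply_sub_smul_add_smul_le (hF : ∀ x, HasGradientAt F (F' x) x)
    (hF' : ∀ x y, ‖F' x - F' y‖ ≤ L * ‖x - y‖) (hL : 0 ≤ L) (x g u : E) (η β : ℝ) :
    F (x - η • g + β • u) ≤
      F x - η * ⟪F' x, g⟫ + β * ⟪F' x, u⟫ + L * (η ^ 2 * ‖g‖ ^ 2 + β ^ 2 * ‖u‖ ^ 2) := by
  have hnorm : ‖-(η • g) + β • u‖ ^ 2 ≤ 2 * (η ^ 2 * ‖g‖ ^ 2 + β ^ 2 * ‖u‖ ^ 2) :=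
    calc ‖-(η • g) + β • u‖ ^ 2 ≤ (‖η • g‖ + ‖β • u‖) ^ 2 := by
          gcongr
          simpa using norm_add_le (-(η • g)) (β • u)
      _ ≤ 2 * (‖η • g‖ ^ 2 + ‖β • u‖ ^ 2) := add_sq_le
      _ = 2 * (η ^ 2 * ‖g‖ ^ 2 + β ^ 2 * ‖u‖ ^ 2) := by
          simp only [norm_smul, mul_pow, Real.norm_eq_abs, sq_abs]
  have h := apply_add_le_of_lipschitz_gradient hF hF' x (-(η • g) + β • u)
  rw [inner_add_right, inner_neg_right, real_inner_smul_right, real_inner_smul_right] at h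
  rw [show x - η • g + β • u = x + (-(η • g) + β • u) by abel]
  linarith [mul_le_mul_of_nonneg_left hnorm hL]

theorem apply_sub_smul_add_smul_le_of_norm_le (hF : ∀ x, HasGradientAt F (F' x) x)
    (hF' : ∀ x y, ‖F' x - F' y‖ ≤ L * ‖x - y‖) (hL : 0 ≤ L) {x u : E} {β ρ r : ℝ}
    (hβ : 0 ≤ β) (hx : ‖F' x‖ ≤ ρ) (hu : ‖u‖ ≤ r) (hr : L * β ^ 2 * r ^ 2 ≤ β * ρ * r)
    (g : E) (η : ℝ) :
    F (x - η • g + β • u) ≤ F x + 2 * β * ρ * r - η * ⟪F' x, g⟫ + L * η ^ 2 * ‖g‖ ^ 2 := by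
  have hdrift : β * ⟪F' x, u⟫ ≤ β * (ρ * r) :=
    mul_le_mul_of_nonneg_left ((real_inner_le_norm _ _).trans
      (mul_le_mul hx hu (norm_nonneg _) ((norm_nonneg _).trans hx))) hβ
  have hsq : L * β ^ 2 * ‖u‖ ^ 2 ≤ L * β ^ 2 * r ^ 2 := by gcongr
  linarith [apply_sub_smul_add_smul_le hF hF' hL x g u η β]

end Descent

theorem integral_norm_sq_eq_norm_integral_sq_add {Ω E : Type*} [MeasurableSpace Ω]
    {P : Measure Ω} [IsProbabilityMeasure P] [NormedAddCommGroup E] [InnerProductSpace ℝ E]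
    [CompleteSpace E] {g : Ω → E} (hg : MemLp g 2 P) :
    ∫ ω, ‖g ω‖ ^ 2 ∂P = ‖∫ ω, g ω ∂P‖ ^ 2 + ∫ ω, ‖g ω - ∫ ω', g ω' ∂P‖ ^ 2 ∂P := by
  set m := ∫ ω, g ω ∂P
  have hexp : ∀ ω, ‖g ω‖ ^ 2 = ‖m‖ ^ 2 + 2 * ⟪m, g ω - m⟫ + ‖g ω - m‖ ^ 2 := fun ω => by
    rw [← norm_add_sq_real, add_sub_cancel]
  have hcentered : Integrable (fun ω => g ω - m) P :=
    (hg.integrable one_le_two).sub (integrable_const m)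
  have hcross : ∫ ω, ⟪m, g ω - m⟫ ∂P = 0 := by
    rw [integral_inner hcentered, integral_sub (hg.integrable one_le_two) (integrable_const m)]
    simp [m]
  have hcross_int : Integrable (fun ω => 2 * ⟪m, g ω - m⟫) P :=
    (hcentered.const_inner m).const_mul 2
  have hsum_int : Integrable (fun ω => ‖m‖ ^ 2 + 2 * ⟪m, g ω - m⟫) P :=
    (integrable_const _).add hcross_int
  have hvar_int : Integrable (fun ω => ‖g ω - m‖ ^ 2) P :=
    (hg.sub (memLp_const m)).norm.integrable_sq
  simp_rw [hexp]
  rw [integral_add hsum_int hvar_int, integral_add (integrable_const _) hcross_int,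
    integral_const_mul, hcross]
  simp

theorem integral_le_of_ae_le_const_sub_inner_add_norm_sq {Ω E : Type*} [MeasurableSpace Ω]
    {P : Measure Ω} [IsFiniteMeasure P] [NormedAddCommGroup E] [InnerProductSpace ℝ E]
    [CompleteSpace E] {f : Ω → ℝ} {g : Ω → E} (hf : Integrable f P) (hg : MemLp g 2 P)
    {a b c : ℝ} {v : E} (hfg : ∀ᵐ ω ∂P, f ω ≤ a - b * ⟪v, g ω⟫ + c * ‖g ω‖ ^ 2) :
    ∫ ω, f ω ∂P ≤ P.real Set.univ * a - b * ⟪v, ∫ ω, g ω ∂P⟫ + c * ∫ ω, ‖g ω‖ ^ 2 ∂P := by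
  have hg1 := hg.integrable one_le_two
  have hinner_int : Integrable (fun ω => b * ⟪v, g ω⟫) P := (hg1.const_inner v).const_mul b
  have hlin_int : Integrable (fun ω => a - b * ⟪v, g ω⟫) P := (integrable_const a).sub hinner_int
  have hsq_int : Integrable (fun ω => c * ‖g ω‖ ^ 2) P := hg.norm.integrable_sq.const_mul c
  have hquad_int : Integrable (fun ω => a - b * ⟪v, g ω⟫ + c * ‖g ω‖ ^ 2) P :=
    hlin_int.add hsq_int
  refine (integral_mono_ae hf hquad_int hfg).trans_eq ?_
  rw [integral_add hlin_int hsq_int, integral_sub (integrable_const a) hinner_int,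
    integral_const, integral_const_mul, integral_const_mul, integral_inner hg1, smul_eq_mul]

theorem balance_single_round_descent_general
    {E : Type*} [NormedAddCommGroup E] [InnerProductSpace ℝ E]
    [FiniteDimensional ℝ E]
    {F : E → ℝ} {F' : E → E}
    (hdiff : ∀ x, HasGradientAt F (F' x) x)
    {L α ψ ρ δ γ η : ℝ} (hL : 0 < L)
    (hsmooth : ∀ x y, ‖F' x - F' y‖ ≤ L * ‖x - y‖)
    {w : E} (hρbd : ‖F' w‖ ≤ ρ)
    (hα1 : α ≤ 1)
    (hγle : L * γ ^ 2 * ψ ^ 2 * (1 - α) ^ 2 ≤ γ * ρ * ψ * (1 - α))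
    (hη0 : 0 < η) (hη : η ≤ 1 / (4 * L))
    {Ω : Type*} [MeasurableSpace Ω] {P : Measure Ω} [IsProbabilityMeasure P]
    (g u : Ω → E)
    (hgL2 : MemLp g 2 P)
    (hgmean : (∫ ω, g ω ∂P) = F' w)
    (hgvar : (∫ ω, ‖g ω - F' w‖ ^ 2 ∂P) ≤ δ ^ 2)
    (hubd : ∀ᵐ ω ∂P, ‖u ω‖ ≤ γ * ψ)
    (hFint : Integrable (fun ω => F (w - η • g ω + (1 - α) • u ω)) P) :
    (∫ ω, F (w - η • g ω + (1 - α) • u ω) ∂P) ≤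
      F w - η / 2 * ‖F' w‖ ^ 2 + 2 * L * η ^ 2 * δ ^ 2 + 2 * γ * ρ * ψ * (1 - α) := by
  set C := 2 * (1 - α) * ρ * (γ * ψ)
  have hLη : L * η ≤ 1 / 4 := by
    rw [le_div_iff₀ (by positivity)] at hη
    linarith
  have hstep : ∀ᵐ ω ∂P, F (w - η • g ω + (1 - α) • u ω) ≤
      F w + C - η * ⟪F' w, g ω⟫ + L * η ^ 2 * ‖g ω‖ ^ 2 :=
    hubd.mono fun ω hω => apply_sub_smul_add_smul_le_of_norm_le hdiff hsmooth hL.le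
      (by linarith) hρbd hω (by linarith) (g ω) η
  have hmoment : ∫ ω, ‖g ω‖ ^ 2 ∂P ≤ ‖F' w‖ ^ 2 + δ ^ 2 := by
    rw [integral_norm_sq_eq_norm_integral_sq_add hgL2, hgmean]
    linarith
  have hexpect := integral_le_of_ae_le_const_sub_inner_add_norm_sq hFint hgL2 hstep
  rw [probReal_univ, one_mul, hgmean, real_inner_self_eq_norm_sq] at hexpect
  linarith [mul_le_mul_of_nonneg_right hLη (by positivity : 0 ≤ η * ‖F' w‖ ^ 2),
    mul_le_mul_of_nonneg_left hmoment (by positivity : 0 ≤ L * η ^ 2),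
    (by positivity : 0 ≤ η * ‖F' w‖ ^ 2), (by positivity : 0 ≤ L * η ^ 2 * δ ^ 2)]

/-- Single-round expected descent inequality (Eq. (15) in the proof of Theorem 1). -/
theorem balance_single_round_descent
    {E : Type*} [NormedAddCommGroup E] [InnerProductSpace ℝ E]
    [FiniteDimensional ℝ E] [MeasurableSpace E] [BorelSpace E]
    {F : E → ℝ} {F' : E → E}
    (hdiff : ∀ x, HasGradientAt F (F' x) x)
    {L α ψ ρ δ γ η : ℝ} (hL : 0 < L)
    (hsmooth : ∀ x y, ‖F' x - F' y‖ ≤ L * ‖x - y‖)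
    {w : E} (hρbd : ‖F' w‖ ≤ ρ)
    (hα0 : 0 ≤ α) (hα1 : α ≤ 1) (hψ : 0 < ψ) (hρ : 0 < ρ) (hδ : 0 ≤ δ) (hγ : 0 < γ)
    (hγle : L * γ ^ 2 * ψ ^ 2 * (1 - α) ^ 2 ≤ γ * ρ * ψ * (1 - α))
    (hη0 : 0 < η) (hη : η ≤ 1 / (4 * L))
    {Ω : Type*} [MeasurableSpace Ω] {P : Measure Ω} [IsProbabilityMeasure P]
    (g u : Ω → E)
    (hgL2 : MemLp g 2 P)
    (hgmean : (∫ ω, g ω ∂P) = F' w)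
    (hgvar : (∫ ω, ‖g ω - F' w‖ ^ 2 ∂P) ≤ δ ^ 2)
    (humeas : Measurable u)
    (hubd : ∀ᵐ ω ∂P, ‖u ω‖ ≤ γ * ψ)
    (hFint : Integrable (fun ω => F (w - η • g ω + (1 - α) • u ω)) P) :
    (∫ ω, F (w - η • g ω + (1 - α) • u ω) ∂P) ≤
      F w - η / 2 * ‖F' w‖ ^ 2 + 2 * L * η ^ 2 * δ ^ 2 + 2 * γ * ρ * ψ * (1 - α) :=
  balance_single_round_descent_general hdiff hL hsmooth hρbd hα1 hγle hη0 hη g u hgL2 hgmean hgvar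
    hubd hFint
end

section
/- Let E be a finite-dimensional real inner product space and let F : E → ℝ be differentiable, μ-strongly convex (μ > 0) and L-smooth (L > 0), with global minimizer w* ∈ E. Fix w ∈ E with ‖∇F(w)‖ ≤ ρ, real parameters 0 ≤ α ≤ 1, ψ > 0, ρ > 0, δ ≥ 0, γ > 0 with L·γ²·ψ²·(1−α)² ≤ γ·ρ·ψ·(1−α), and 0 < η ≤ 1/(4L). Let (Ω, 𝓕, P) be a probability space, let g : Ω → E be square-integrable with ∫ g dP = ∇F(w) and ∫ ‖g − ∇F(w)‖² dP ≤ δ², and let u : Ω → E be measurable with ‖u(ω)‖ ≤ γψ almost everywhere. Define w⁺ = w − η·g + (1−α)·u and assume F(w⁺) is integrable. Then E[F(w⁺)] − F(w*) ≤ (1 − μη)·(F(w) − F(w*)) + 2Lη²δ² + 2γρψ(1−α). -/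
/-!
By the descent lemma for the `L`-smooth `F`, the perturbation `(1 - α) • u` costs at most
`ρ (1 - α) γ ψ + L (1 - α)² γ² ψ² ≤ 2 γ ρ ψ (1 - α)`, while in expectation the stochastic gradient
step contributes `-η ‖∇F w‖² + L η² (δ² + ‖∇F w‖²)` (bias–variance decomposition of `E ‖g‖²`).
As `L η ≤ 1/4` this is at most `L η² δ² - (η / 2) ‖∇F w‖²`, and the Polyak–Łojasiewicz
inequality `2 μ (F w - F w*) ≤ ‖∇F w‖²`, which follows from strong convexity, finishes.
-/

open MeasureTheory RealInnerProductSpace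

section Descent

variable {E : Type*} [NormedAddCommGroup E] {L : ℝ}

theorem apply_add_le_of_norm_fderiv_sub_le [NormedSpace ℝ E] {f : E → ℝ} {f' : E → E →L[ℝ] ℝ}
    (hf : ∀ x, HasFDerivAt f (f' x) x) (hLip : ∀ x y, ‖f' x - f' y‖ ≤ L * ‖x - y‖) (x v : E) :
    f (x + v) ≤ f x + f' x v + L / 2 * ‖v‖ ^ 2 := by
  set φ : ℝ → ℝ := fun t => f (x + t • v) - t * f' x v - L / 2 * t ^ 2 * ‖v‖ ^ 2
  have hφ : ∀ t, HasDerivAt φ (f' (x + t • v) v - f' x v - L * t * ‖v‖ ^ 2) t := by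
    intro t
    have hline : HasDerivAt (fun t : ℝ => x + t • v) v t := by
      simpa using ((hasDerivAt_id t).smul_const v).const_add x
    have hsq : HasDerivAt (fun t : ℝ => L / 2 * t ^ 2 * ‖v‖ ^ 2) (L * t * ‖v‖ ^ 2) t := by
      have hpow : HasDerivAt (fun t : ℝ => t ^ 2) (2 * t) t := by simpa using hasDerivAt_pow 2 t
      exact ((hpow.const_mul (L / 2)).mul_const (‖v‖ ^ 2)).congr_deriv (by ring)
    have hcomp : HasDerivAt (fun t : ℝ => f (x + t • v)) (f' (x + t • v) v) t :=
      (hf _).comp_hasDerivAt t hline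
    have hlin : HasDerivAt (fun t : ℝ => t * f' x v) (f' x v) t := by
      simpa using (hasDerivAt_id t).mul_const (f' x v)
    exact (hcomp.sub hlin).sub hsq
  have hφ' : ∀ t ∈ interior (Set.Icc (0 : ℝ) 1), deriv φ t ≤ 0 := by
    intro t ht
    rw [interior_Icc] at ht
    have hlip : ‖f' (x + t • v) - f' x‖ ≤ L * (t * ‖v‖) := by
      simpa [norm_smul, abs_of_pos ht.1] using hLip (x + t • v) x
    have : f' (x + t • v) v - f' x v ≤ L * t * ‖v‖ ^ 2 :=
      calc f' (x + t • v) v - f' x v = (f' (x + t • v) - f' x) v := rfl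
        _ ≤ ‖f' (x + t • v) - f' x‖ * ‖v‖ :=
            (Real.le_norm_self _).trans ((f' (x + t • v) - f' x).le_opNorm v)
        _ ≤ L * (t * ‖v‖) * ‖v‖ := by gcongr
        _ = L * t * ‖v‖ ^ 2 := by ring
    rw [(hφ t).deriv]
    linarith
  have hanti : AntitoneOn φ (Set.Icc 0 1) :=
    antitoneOn_of_deriv_nonpos (convex_Icc 0 1)
      (fun t _ => (hφ t).continuousAt.continuousWithinAt)
      (fun t _ => (hφ t).differentiableAt.differentiableWithinAt) hφ'
  have h01 := hanti (Set.left_mem_Icc.2 zero_le_one) (Set.right_mem_Icc.2 zero_le_one) zero_le_one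
  norm_num [φ] at h01
  linarith

variable [InnerProductSpace ℝ E] [CompleteSpace E] {F : E → ℝ} {F' : E → E}

theorem apply_add_le_of_norm_gradient_sub_le (hF : ∀ x, HasGradientAt F (F' x) x)
    (hLip : ∀ x y, ‖F' x - F' y‖ ≤ L * ‖x - y‖) (x v : E) :
    F (x + v) ≤ F x + ⟪F' x, v⟫ + L / 2 * ‖v‖ ^ 2 :=
  apply_add_le_of_norm_fderiv_sub_le (fun x => (hF x).hasFDerivAt)
    (fun x y => by rw [← map_sub, LinearIsometryEquiv.norm_map]; exact hLip x y) x v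

theorem apply_sub_smul_add_le (hF : ∀ x, HasGradientAt F (F' x) x) (hL : 0 ≤ L)
    (hLip : ∀ x y, ‖F' x - F' y‖ ≤ L * ‖x - y‖) {x a b : E} {η ρ β : ℝ}
    (hρ : ‖F' x‖ ≤ ρ) (hb : ‖b‖ ≤ β) :
    F (x - η • a + b) ≤ F x - η * ⟪F' x, a⟫ + L * η ^ 2 * ‖a‖ ^ 2 + (ρ * β + L * β ^ 2) := by
  have hv : ‖-(η • a) + b‖ ^ 2 ≤ 2 * (η ^ 2 * ‖a‖ ^ 2 + ‖b‖ ^ 2) :=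
    calc ‖-(η • a) + b‖ ^ 2 ≤ (‖η • a‖ + ‖b‖) ^ 2 := by
          gcongr; exact (norm_add_le _ _).trans_eq (by rw [norm_neg])
      _ ≤ 2 * (‖η • a‖ ^ 2 + ‖b‖ ^ 2) := add_sq_le
      _ = 2 * (η ^ 2 * ‖a‖ ^ 2 + ‖b‖ ^ 2) := by rw [norm_smul, mul_pow, Real.norm_eq_abs, sq_abs]
  have hcross : ⟪F' x, b⟫ ≤ ρ * β :=
    (real_inner_le_norm _ _).trans (mul_le_mul hρ hb (norm_nonneg _) ((norm_nonneg _).trans hρ))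
  have hquad : L * ‖b‖ ^ 2 ≤ L * β ^ 2 := by gcongr
  have hdesc := apply_add_le_of_norm_gradient_sub_le hF hLip x (-(η • a) + b)
  rw [← add_assoc, ← sub_eq_add_neg, inner_add_right, inner_neg_right, real_inner_smul_right]
    at hdesc
  nlinarith [mul_le_mul_of_nonneg_left hv hL]

end Descent

theorem two_mul_sub_le_sq_norm_of_strongly_convex {E : Type*} [NormedAddCommGroup E]
    [InnerProductSpace ℝ E] {F : E → ℝ} {F' : E → E} {μ : ℝ} (hμ : 0 ≤ μ)
    (hsc : ∀ x y, F x + ⟪F' x, y - x⟫ + μ / 2 * ‖y - x‖ ^ 2 ≤ F y) (x y : E) :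
    2 * μ * (F x - F y) ≤ ‖F' x‖ ^ 2 := by
  have hcs : -(‖F' x‖ * ‖y - x‖) ≤ ⟪F' x, y - x⟫ := neg_le_of_abs_le (abs_real_inner_le_norm _ _)
  nlinarith [hsc x y, mul_le_mul_of_nonneg_left hcs hμ, sq_nonneg (‖F' x‖ - μ * ‖y - x‖)]

section Expectation

variable {E : Type*} [NormedAddCommGroup E] [InnerProductSpace ℝ E] [CompleteSpace E]
  {Ω : Type*} [MeasurableSpace Ω] {P : Measure Ω} [IsProbabilityMeasure P] {g : Ω → E}

theorem integral_norm_sq_eq_integral_norm_sub_sq_add (hg : MemLp g 2 P) :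
    ∫ ω, ‖g ω‖ ^ 2 ∂P = ∫ ω, ‖g ω - ∫ ω, g ω ∂P‖ ^ 2 ∂P + ‖∫ ω, g ω ∂P‖ ^ 2 := by
  set m := ∫ ω, g ω ∂P
  have hgm : MemLp (fun ω => g ω - m) 2 P := hg.sub (memLp_const m)
  have hsq : Integrable (fun ω => ‖g ω - m‖ ^ 2) P :=
    (memLp_two_iff_integrable_sq_norm hgm.1).1 hgm
  have hinner : Integrable (fun ω => ⟪m, g ω - m⟫) P := (hgm.integrable one_le_two).const_inner m
  have hcentered : ∫ ω, ⟪m, g ω - m⟫ ∂P = 0 := by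
    rw [integral_inner (hgm.integrable one_le_two),
      integral_sub (hg.integrable one_le_two) (integrable_const m)]
    simp [m]
  calc ∫ ω, ‖g ω‖ ^ 2 ∂P = ∫ ω, (‖g ω - m‖ ^ 2 + 2 * ⟪m, g ω - m⟫ + ‖m‖ ^ 2) ∂P := by
        congr with ω
        rw [real_inner_comm, ← norm_add_sq_real, sub_add_cancel]
    _ = ∫ ω, ‖g ω - m‖ ^ 2 ∂P + ‖m‖ ^ 2 := by
        rw [integral_add (hsq.fun_add (hinner.const_mul 2)) (integrable_const _),
          integral_add hsq (hinner.const_mul 2), integral_const_mul, hcentered]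
        simp

theorem integral_le_of_ae_le_sub_inner_add_norm_sq {X : Ω → ℝ} (hX : Integrable X P)
    (hg : MemLp g 2 P) {m : E} {c a b : ℝ}
    (hle : ∀ᵐ ω ∂P, X ω ≤ c - a * ⟪m, g ω⟫ + b * ‖g ω‖ ^ 2) :
    ∫ ω, X ω ∂P ≤ c - a * ⟪m, ∫ ω, g ω ∂P⟫ + b * ∫ ω, ‖g ω‖ ^ 2 ∂P := by
  have hinner : Integrable (fun ω => a * ⟪m, g ω⟫) P :=
    ((hg.integrable one_le_two).const_inner m).const_mul a
  have hsq : Integrable (fun ω => b * ‖g ω‖ ^ 2) P :=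
    ((memLp_two_iff_integrable_sq_norm hg.1).1 hg).const_mul b
  calc ∫ ω, X ω ∂P ≤ ∫ ω, (c - a * ⟪m, g ω⟫ + b * ‖g ω‖ ^ 2) ∂P :=
        integral_mono_ae hX (((integrable_const c).sub' hinner).fun_add hsq) hle
    _ = c - a * ⟪m, ∫ ω, g ω ∂P⟫ + b * ∫ ω, ‖g ω‖ ^ 2 ∂P := by
        rw [integral_add ((integrable_const c).sub' hinner) hsq,
          integral_sub (integrable_const c) hinner, integral_const_mul, integral_const_mul,
          integral_inner (hg.integrable one_le_two)]
        simp

end Expectation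

theorem balance_single_round_contraction_general
    {E : Type*} [NormedAddCommGroup E] [InnerProductSpace ℝ E]
    [FiniteDimensional ℝ E]
    {F : E → ℝ} {F' : E → E}
    (hdiff : ∀ x, HasGradientAt F (F' x) x)
    {μ L α ψ ρ δ γ η : ℝ} (hμ : 0 < μ) (hL : 0 < L)
    (hstrongconvex : ∀ x y, F x + ⟪F' x, y - x⟫ + μ / 2 * ‖y - x‖ ^ 2 ≤ F y)
    (hsmooth : ∀ x y, ‖F' x - F' y‖ ≤ L * ‖x - y‖)
    {wstar : E}
    {w : E} (hρbd : ‖F' w‖ ≤ ρ)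
    (hα1 : α ≤ 1)
    (hγle : L * γ ^ 2 * ψ ^ 2 * (1 - α) ^ 2 ≤ γ * ρ * ψ * (1 - α))
    (hη0 : 0 < η) (hη : η ≤ 1 / (4 * L))
    {Ω : Type*} [MeasurableSpace Ω] {P : Measure Ω} [IsProbabilityMeasure P]
    (g u : Ω → E)
    (hgL2 : MemLp g 2 P)
    (hgmean : (∫ ω, g ω ∂P) = F' w)
    (hgvar : (∫ ω, ‖g ω - F' w‖ ^ 2 ∂P) ≤ δ ^ 2)
    (hubd : ∀ᵐ ω ∂P, ‖u ω‖ ≤ γ * ψ)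
    (hFint : Integrable (fun ω => F (w - η • g ω + (1 - α) • u ω)) P) :
    (∫ ω, F (w - η • g ω + (1 - α) • u ω) ∂P) - F wstar ≤
      (1 - μ * η) * (F w - F wstar) + 2 * L * η ^ 2 * δ ^ 2
        + 2 * γ * ρ * ψ * (1 - α) := by
  have hstep : ∀ᵐ ω ∂P, F (w - η • g ω + (1 - α) • u ω) ≤
      F w + 2 * γ * ρ * ψ * (1 - α) - η * ⟪F' w, g ω⟫ + L * η ^ 2 * ‖g ω‖ ^ 2 := by
    filter_upwards [hubd] with ω hu
    have hb : ‖(1 - α) • u ω‖ ≤ (1 - α) * (γ * ψ) := by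
      rw [norm_smul, Real.norm_of_nonneg (sub_nonneg.2 hα1)]
      gcongr
    linarith [apply_sub_smul_add_le (a := g ω) (η := η) hdiff hL.le hsmooth hρbd hb, hγle]
  have hsecond : ∫ ω, ‖g ω‖ ^ 2 ∂P ≤ δ ^ 2 + ‖F' w‖ ^ 2 := by
    rw [integral_norm_sq_eq_integral_norm_sub_sq_add hgL2, hgmean]
    gcongr
  have hPL := two_mul_sub_le_sq_norm_of_strongly_convex hμ.le hstrongconvex w wstar
  have hLη : L * η ≤ 1 / 4 := by
    rw [le_div_iff₀ (by positivity)] at hη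
    linarith
  calc (∫ ω, F (w - η • g ω + (1 - α) • u ω) ∂P) - F wstar
      ≤ F w + 2 * γ * ρ * ψ * (1 - α) - η * ⟪F' w, ∫ ω, g ω ∂P⟫
          + L * η ^ 2 * ∫ ω, ‖g ω‖ ^ 2 ∂P - F wstar := by
        gcongr
        exact integral_le_of_ae_le_sub_inner_add_norm_sq hFint hgL2 hstep
    _ ≤ F w + 2 * γ * ρ * ψ * (1 - α) - η * ‖F' w‖ ^ 2
          + L * η ^ 2 * (δ ^ 2 + ‖F' w‖ ^ 2) - F wstar := by
        rw [hgmean, real_inner_self_eq_norm_sq]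
        gcongr
    _ ≤ (1 - μ * η) * (F w - F wstar) + 2 * L * η ^ 2 * δ ^ 2
          + 2 * γ * ρ * ψ * (1 - α) := by
        have hηm : 0 ≤ η * ‖F' w‖ ^ 2 := by positivity
        linarith [mul_le_mul_of_nonneg_left hPL hη0.le, mul_le_mul_of_nonneg_left hLη hηm,
          mul_nonneg (mul_nonneg hL.le (sq_nonneg η)) (sq_nonneg δ)]

/-- Per-round contraction inequality in the proof of Theorem 1 (descent + PL). -/
theorem balance_single_round_contraction
    {E : Type*} [NormedAddCommGroup E] [InnerProductSpace ℝ E]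
    [FiniteDimensional ℝ E] [MeasurableSpace E] [BorelSpace E]
    {F : E → ℝ} {F' : E → E}
    (hdiff : ∀ x, HasGradientAt F (F' x) x)
    {μ L α ψ ρ δ γ η : ℝ} (hμ : 0 < μ) (hL : 0 < L)
    (hstrongconvex : ∀ x y, F x + ⟪F' x, y - x⟫ + μ / 2 * ‖y - x‖ ^ 2 ≤ F y)
    (hsmooth : ∀ x y, ‖F' x - F' y‖ ≤ L * ‖x - y‖)
    {wstar : E} (hmin : ∀ x, F wstar ≤ F x)
    {w : E} (hρbd : ‖F' w‖ ≤ ρ)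
    (hα0 : 0 ≤ α) (hα1 : α ≤ 1) (hψ : 0 < ψ) (hρ : 0 < ρ) (hδ : 0 ≤ δ) (hγ : 0 < γ)
    (hγle : L * γ ^ 2 * ψ ^ 2 * (1 - α) ^ 2 ≤ γ * ρ * ψ * (1 - α))
    (hη0 : 0 < η) (hη : η ≤ 1 / (4 * L))
    {Ω : Type*} [MeasurableSpace Ω] {P : Measure Ω} [IsProbabilityMeasure P]
    (g u : Ω → E)
    (hgL2 : MemLp g 2 P)
    (hgmean : (∫ ω, g ω ∂P) = F' w)
    (hgvar : (∫ ω, ‖g ω - F' w‖ ^ 2 ∂P) ≤ δ ^ 2)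
    (humeas : Measurable u)
    (hubd : ∀ᵐ ω ∂P, ‖u ω‖ ≤ γ * ψ)
    (hFint : Integrable (fun ω => F (w - η • g ω + (1 - α) • u ω)) P) :
    (∫ ω, F (w - η • g ω + (1 - α) • u ω) ∂P) - F wstar ≤
      (1 - μ * η) * (F w - F wstar) + 2 * L * η ^ 2 * δ ^ 2
        + 2 * γ * ρ * ψ * (1 - α) :=
  balance_single_round_contraction_general hdiff hμ hL hstrongconvex hsmooth hρbd hα1 hγle hη0 hη g
    u hgL2 hgmean hgvar hubd hFint
end
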